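/- Let N_H, N_V be positive integers with N = N_H·N_V ≥ 2, N_s an integer with 0 ≤ N_s ≤ N, and a, b real numbers with sin(a/2) ≠ 0 and sin(b/2) ≠ 0; set E = (sin(N_H·a/2)/sin(a/2))·(sin(N_V·b/2)/sin(b/2)). With ζ_n = exp(i·(a·(p − (N_H+1)/2) + b·(q − (N_V+1)/2))) for grid points n = (p,q) and v(T) = 2·Σ_{n∈T} ζ_n − Σ_n ζ_n, the variance of v under the uniform distribution on size-N_s subsets T, i.e. the average of |v(T)|² minus the squared modulus of the average of v(T), equals 4·(N_s(N−N_s)/(N(N−1)))·(N − E²/N). -/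

import Mathlib

/-!
Write `S T = ∑ n ∈ T, ζ n`. The full sum `∑ n, ζ n` factors into two centred Dirichlet kernels and
equals the real number `E = μ₂ μ₃`, so `v T = 2 • S T - E` and `V[v] = 4 V[S]`. The variance of a
sum over a uniformly random `k`-subset of an `N`-set is the finite-population formula
`k (N - k) / (N (N - 1)) * (∑ ‖f x‖² - ‖∑ f x‖² / N)`: by double counting, a point lies in
`k/N` of the `k`-subsets and two distinct points lie together in `k (k - 1) / (N (N - 1))` of them.
Finally `‖ζ n‖ = 1`, so `∑ ‖ζ n‖² = N`.
-/

open Finset Complex Real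

namespace Finset

variable {α : Type*} [DecidableEq α]

theorem card_filter_powersetCard_subset_mul_descFactorial {s u : Finset α} (hu : u ⊆ s) (k : ℕ) :
    #{T ∈ s.powersetCard k | u ⊆ T} * (#s).descFactorial #u
      = (#s).choose k * k.descFactorial #u := by
  by_cases huk : #u ≤ k
  · rw [card_filter_powersetCard_subset u s k hu huk, Nat.descFactorial_eq_factorial_mul_choose,
      Nat.descFactorial_eq_factorial_mul_choose, mul_left_comm, mul_left_comm ((#s).choose k),
      Nat.choose_mul huk]
    ring
  · have hempty : {T ∈ s.powersetCard k | u ⊆ T} = ∅ :=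
      filter_eq_empty_iff.2 fun T hT huT => huk <| (mem_powersetCard.1 hT).2 ▸ card_le_card huT
    rw [hempty, Nat.descFactorial_eq_zero_iff_lt.2 (not_le.1 huk)]
    simp

theorem sum_eq_sum_ite_mem_of_subset {M : Type*} [AddCommMonoid M] {s T : Finset α} (h : T ⊆ s)
    (f : α → M) : ∑ x ∈ T, f x = ∑ x ∈ s, if x ∈ T then f x else 0 := by
  rw [sum_ite_mem, inter_eq_right.2 h]

theorem sum_powersetCard_sum_eq_sum_card_smul {M : Type*} [AddCommMonoid M] (s : Finset α)
    (k : ℕ) (f : α → M) :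
    ∑ T ∈ s.powersetCard k, ∑ x ∈ T, f x = ∑ x ∈ s, #{T ∈ s.powersetCard k | x ∈ T} • f x := by
  rw [sum_congr rfl fun T hT => sum_eq_sum_ite_mem_of_subset (mem_powersetCard.1 hT).1 f, sum_comm]
  simp [sum_ite, sum_const]

theorem sum_powersetCard_sum_sum_eq_sum_card_smul {M : Type*} [AddCommMonoid M] (s : Finset α)
    (k : ℕ) (g : α → α → M) :
    ∑ T ∈ s.powersetCard k, ∑ x ∈ T, ∑ y ∈ T, g x y
      = ∑ x ∈ s, ∑ y ∈ s, #{T ∈ s.powersetCard k | x ∈ T ∧ y ∈ T} • g x y := by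
  have : ∀ T ∈ s.powersetCard k, ∑ x ∈ T, ∑ y ∈ T, g x y
      = ∑ x ∈ s, ∑ y ∈ s, if x ∈ T ∧ y ∈ T then g x y else 0 := fun T hT => by
    have hsub : T ⊆ s := (mem_powersetCard.1 hT).1
    rw [sum_eq_sum_ite_mem_of_subset hsub]
    refine sum_congr rfl fun x _ => ?_
    rw [sum_eq_sum_ite_mem_of_subset hsub]
    by_cases hx : x ∈ T <;> simp [hx]
  rw [sum_congr rfl this, sum_comm]
  refine sum_congr rfl fun x _ => ?_
  rw [sum_comm]
  simp [sum_ite, sum_const]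

theorem card_filter_mem_powersetCard_mul_card {s : Finset α} {x : α} (hx : x ∈ s) (k : ℕ) :
    #{T ∈ s.powersetCard k | x ∈ T} * #s = (#s).choose k * k := by
  simpa [singleton_subset_iff] using
    card_filter_powersetCard_subset_mul_descFactorial (singleton_subset_iff.2 hx) k

theorem cast_card_filter_mem_mem_powersetCard_mul {R : Type*} [CommRing R] {s : Finset α}
    {x y : α} (hx : x ∈ s) (hy : y ∈ s) (k : ℕ) :
    (#{T ∈ s.powersetCard k | x ∈ T ∧ y ∈ T} : R) * (#s * (#s - 1))
      = (#s).choose k * if x = y then k * (#s - 1 : R) else k * (k - 1 : R) := by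
  split_ifs with hxy
  · subst hxy
    have hcount : (#{T ∈ s.powersetCard k | x ∈ T} : R) * #s = (#s).choose k * k := by
      simpa using congrArg (Nat.cast : ℕ → R) (card_filter_mem_powersetCard_mul_card hx k)
    simp only [and_self]
    rw [← mul_assoc, hcount, mul_assoc]
  · have hpair : {x, y} ⊆ s := insert_subset hx (singleton_subset_iff.2 hy)
    have hcount := card_filter_powersetCard_subset_mul_descFactorial hpair k
    rw [card_pair hxy] at hcount
    simp only [insert_subset_iff, singleton_subset_iff] at hcount
    rw [← Nat.cast_descFactorial_two, ← Nat.cast_descFactorial_two]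
    simpa using congrArg (Nat.cast : ℕ → R) hcount

theorem card_smul_sum_powersetCard_sum {M : Type*} [AddCommMonoid M] (s : Finset α) (k : ℕ)
    (f : α → M) :
    #s • ∑ T ∈ s.powersetCard k, ∑ x ∈ T, f x = (k * (#s).choose k) • ∑ x ∈ s, f x := by
  rw [sum_powersetCard_sum_eq_sum_card_smul, smul_sum, smul_sum]
  refine sum_congr rfl fun x hx => ?_
  rw [smul_smul, mul_comm, card_filter_mem_powersetCard_mul_card hx, mul_comm]

theorem card_mul_sub_one_mul_sum_powersetCard_sum_sum {R : Type*} [CommRing R] (s : Finset α)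
    (k : ℕ) (g : α → α → R) :
    (#s * (#s - 1) : R) * ∑ T ∈ s.powersetCard k, ∑ x ∈ T, ∑ y ∈ T, g x y
      = (#s).choose k *
          (k * (#s - k : R) * ∑ x ∈ s, g x x + k * (k - 1) * ∑ x ∈ s, ∑ y ∈ s, g x y) := by
  have hcoef (x y : α) : (if x = y then k * (#s - 1 : R) else k * (k - 1 : R))
      = k * (k - 1) + if x = y then k * (#s - k : R) else 0 := by
    split_ifs <;> ring
  have hterm : ∀ x ∈ s, ∀ y ∈ s,
      (#s * (#s - 1) : R) * (#{T ∈ s.powersetCard k | x ∈ T ∧ y ∈ T} • g x y)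
        = (#s).choose k *
            (k * (k - 1) * g x y + if x = y then k * (#s - k : R) * g x x else 0) := by
    intro x hx y hy
    rw [nsmul_eq_mul, mul_left_comm, ← mul_assoc _ _ (g x y),
      cast_card_filter_mem_mem_powersetCard_mul hx hy, hcoef]
    split_ifs with hxy
    · subst hxy; ring
    · ring
  rw [sum_powersetCard_sum_sum_eq_sum_card_smul, mul_sum]
  simp_rw [mul_sum]
  rw [sum_congr rfl fun x hx => sum_congr rfl fun y hy => hterm x hx y hy]
  simp only [← mul_sum, sum_add_distrib, sum_ite_eq, sum_ite_mem, inter_self]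
  ring

end Finset

section UniformVariance

variable {ι E : Type*}

noncomputable def uniformVariance [SeminormedAddCommGroup E] [NormedSpace ℝ E] (W : Finset ι)
    (X : ι → E) : ℝ :=
  (#W : ℝ)⁻¹ * ∑ i ∈ W, ‖X i‖ ^ 2 - ‖(#W : ℝ)⁻¹ • ∑ i ∈ W, X i‖ ^ 2

theorem uniformVariance_smul [SeminormedAddCommGroup E] [NormedSpace ℝ E] (W : Finset ι)
    (X : ι → E) (c : ℝ) :
    uniformVariance W (fun i => c • X i) = c ^ 2 * uniformVariance W X := by
  simp only [uniformVariance, norm_smul, mul_pow, ← smul_sum, smul_comm _ c, Real.norm_eq_abs,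
    sq_abs, ← mul_sum]
  ring

theorem uniformVariance_add_const [NormedAddCommGroup E] [InnerProductSpace ℝ E] (W : Finset ι)
    (X : ι → E) (d : E) :
    uniformVariance W (fun i => X i + d) = uniformVariance W X := by
  rcases W.eq_empty_or_nonempty with rfl | hW
  · simp [uniformVariance]
  have hn : (#W : ℝ) ≠ 0 := by exact_mod_cast hW.card_pos.ne'
  have hmean : (#W : ℝ)⁻¹ • ∑ i ∈ W, (X i + d) = (#W : ℝ)⁻¹ • ∑ i ∈ W, X i + d := by
    rw [sum_add_distrib, sum_const, ← Nat.cast_smul_eq_nsmul ℝ, smul_add, inv_smul_smul₀ hn]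
  rw [uniformVariance, uniformVariance, hmean, norm_add_sq_real, real_inner_smul_left]
  simp only [norm_add_sq_real, sum_add_distrib, ← mul_sum, ← sum_inner, sum_const, nsmul_eq_mul]
  field_simp
  ring

end UniformVariance

theorem uniformVariance_powersetCard_sum {α E : Type*} [DecidableEq α] [NormedAddCommGroup E]
    [InnerProductSpace ℝ E] (s : Finset α) (f : α → E) {k : ℕ} (hk : k ≤ #s) (hs : 2 ≤ #s) :
    uniformVariance (s.powersetCard k) (fun T => ∑ x ∈ T, f x)
      = k * (#s - k) / (#s * (#s - 1)) * (∑ x ∈ s, ‖f x‖ ^ 2 - ‖∑ x ∈ s, f x‖ ^ 2 / #s) := by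
  have hC : ((#s).choose k : ℝ) ≠ 0 := by exact_mod_cast (Nat.choose_pos hk).ne'
  have hN : (#s : ℝ) ≠ 0 := by exact_mod_cast (by omega : #s ≠ 0)
  have hN1 : (#s : ℝ) - 1 ≠ 0 := by
    rw [sub_ne_zero]; exact_mod_cast (by omega : #s ≠ 1)
  have hfirst : (#s : ℝ) • ∑ T ∈ s.powersetCard k, ∑ x ∈ T, f x
      = (k * (#s).choose k : ℝ) • ∑ x ∈ s, f x := by
    rw [Nat.cast_smul_eq_nsmul, ← Nat.cast_mul, Nat.cast_smul_eq_nsmul]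
    exact card_smul_sum_powersetCard_sum s k f
  have hsecond :=
    card_mul_sub_one_mul_sum_powersetCard_sum_sum s k (fun x y => inner ℝ (f x) (f y))
  simp only [real_inner_self_eq_norm_sq, ← sum_inner, ← inner_sum] at hsecond
  have hmean : ((#(s.powersetCard k) : ℝ))⁻¹ • ∑ T ∈ s.powersetCard k, ∑ x ∈ T, f x
      = (k / #s : ℝ) • ∑ x ∈ s, f x := by
    rw [card_powersetCard, ← inv_smul_smul₀ hN (∑ T ∈ s.powersetCard k, ∑ x ∈ T, f x), hfirst,
      smul_smul, smul_smul]
    congr 1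
    field_simp
  have hsquares : ∑ T ∈ s.powersetCard k, ‖∑ x ∈ T, f x‖ ^ 2
      = (#s).choose k * (k * (#s - k) * ∑ x ∈ s, ‖f x‖ ^ 2 + k * (k - 1) * ‖∑ x ∈ s, f x‖ ^ 2)
        / (#s * (#s - 1)) := by
    rw [eq_div_iff (mul_ne_zero hN hN1), mul_comm]
    exact hsecond
  rw [uniformVariance, hmean, norm_smul, card_powersetCard, hsquares, Real.norm_eq_abs, mul_pow,
    sq_abs]
  field_simp
  ring

theorem exp_I_mul_sub_exp_neg_I_mul (x : ℝ) :
    cexp (I * x) - cexp (-(I * x)) = 2 * I * (Real.sin x : ℂ) := by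
  rw [ofReal_sin, Complex.sin]
  ring_nf
  rw [I_sq]
  ring

theorem sum_Icc_exp_centered_mul_sin (M : ℕ) (a : ℝ) :
    (∑ p ∈ Icc 1 M, cexp (I * ((a * ((p : ℝ) - (M + 1) / 2) : ℝ) : ℂ))) * (Real.sin (a / 2) : ℂ)
      = (Real.sin (M * a / 2) : ℂ) := by
  set g : ℕ → ℂ := fun p => cexp (I * ((a * ((p : ℝ) - M / 2) : ℝ) : ℂ))
  have hstep (p : ℕ) : cexp (I * ((a * (((1 + p : ℕ) : ℝ) - (M + 1) / 2) : ℝ) : ℂ))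
      * (2 * I * (Real.sin (a / 2) : ℂ)) = g (p + 1) - g p := by
    rw [← exp_I_mul_sub_exp_neg_I_mul, mul_sub, ← Complex.exp_add, ← Complex.exp_add]
    congr 2 <;> push_cast <;> ring
  have htel : (∑ p ∈ Icc 1 M, cexp (I * ((a * ((p : ℝ) - (M + 1) / 2) : ℝ) : ℂ)))
      * (2 * I * (Real.sin (a / 2) : ℂ)) = 2 * I * (Real.sin (M * a / 2) : ℂ) := by
    rw [← Ico_add_one_right_eq_Icc, sum_Ico_eq_sum_range, Nat.add_sub_cancel, sum_mul,
      sum_congr rfl fun p _ => hstep p, sum_range_sub, ← exp_I_mul_sub_exp_neg_I_mul]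
    simp only [g]
    congr 2 <;> push_cast <;> ring
  have h2I : (2 * I : ℂ) ≠ 0 := mul_ne_zero two_ne_zero I_ne_zero
  apply mul_left_cancel₀ h2I
  linear_combination htel

theorem sum_Icc_exp_centered {a : ℝ} (ha : Real.sin (a / 2) ≠ 0) (M : ℕ) :
    ∑ p ∈ Icc 1 M, cexp (I * ((a * ((p : ℝ) - (M + 1) / 2) : ℝ) : ℂ))
      = ((Real.sin (M * a / 2) / Real.sin (a / 2) : ℝ) : ℂ) := by
  rw [ofReal_div, eq_div_iff (ofReal_ne_zero.2 ha)]
  exact sum_Icc_exp_centered_mul_sin M a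

theorem sum_Icc_prod_Icc_exp_centered {a b : ℝ} (ha : Real.sin (a / 2) ≠ 0)
    (hb : Real.sin (b / 2) ≠ 0) (NH NV : ℕ) :
    ∑ n ∈ Icc 1 NH ×ˢ Icc 1 NV,
        cexp (I * ((a * ((n.1 : ℝ) - (NH + 1) / 2) + b * ((n.2 : ℝ) - (NV + 1) / 2) : ℝ) : ℂ))
      = (((Real.sin (NH * a / 2) / Real.sin (a / 2)) *
          (Real.sin (NV * b / 2) / Real.sin (b / 2)) : ℝ) : ℂ) := by
  rw [ofReal_mul, ← sum_Icc_exp_centered ha, ← sum_Icc_exp_centered hb, sum_mul_sum, sum_product]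
  refine sum_congr rfl fun p _ => sum_congr rfl fun q _ => ?_
  rw [← Complex.exp_add, ofReal_add, mul_add]

theorem stmt_8_general (NH NV : ℕ)
    (N : ℕ) (hN : N = NH * NV) (hN2 : 2 ≤ N) (Ns : ℕ) (hNs : Ns ≤ N)
    (a b : ℝ) (ha : Real.sin (a / 2) ≠ 0) (hb : Real.sin (b / 2) ≠ 0) :
    let E : ℝ := (Real.sin (NH * a / 2) / Real.sin (a / 2)) *
        (Real.sin (NV * b / 2) / Real.sin (b / 2))
    let grid : Finset (ℕ × ℕ) := Finset.Icc 1 NH ×ˢ Finset.Icc 1 NV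
    let ζ : ℕ × ℕ → ℂ := fun n =>
      Complex.exp (Complex.I *
        ((a * ((n.1 : ℝ) - (NH + 1) / 2) + b * ((n.2 : ℝ) - (NV + 1) / 2) : ℝ) : ℂ))
    let v : Finset (ℕ × ℕ) → ℂ := fun T => 2 * ∑ n ∈ T, ζ n - ∑ n ∈ grid, ζ n
    (1 / (Nat.choose N Ns : ℝ)) *
        ∑ T ∈ grid.powersetCard Ns, ‖v T‖ ^ 2
      - ‖(1 / (Nat.choose N Ns : ℂ)) *
          ∑ T ∈ grid.powersetCard Ns, v T‖ ^ 2
      = 4 * ((Ns : ℝ) * ((N : ℝ) - Ns) / ((N : ℝ) * ((N : ℝ) - 1))) *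
          ((N : ℝ) - E ^ 2 / N) := by
  intro E grid ζ v
  have hgrid : #grid = N := by simp [grid, hN]
  have hsum : ∑ n ∈ grid, ζ n = E := sum_Icc_prod_Icc_exp_centered ha hb NH NV
  have hnorm (n : ℕ × ℕ) : ‖ζ n‖ = 1 := by
    simp only [ζ, mul_comm I, norm_exp_ofReal_mul_I]
  have hv : v = fun T => (2 : ℝ) • ∑ n ∈ T, ζ n + -(E : ℂ) := by
    ext T; simp [v, hsum, sub_eq_add_neg]
  have hLHS : (1 / (Nat.choose N Ns : ℝ)) * ∑ T ∈ grid.powersetCard Ns, ‖v T‖ ^ 2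
      - ‖(1 / (Nat.choose N Ns : ℂ)) * ∑ T ∈ grid.powersetCard Ns, v T‖ ^ 2
      = uniformVariance (grid.powersetCard Ns) v := by
    rw [uniformVariance, card_powersetCard, hgrid, one_div, one_div, ← ofReal_natCast,
      ← ofReal_inv, ← real_smul]
  rw [hLHS, hv, uniformVariance_add_const, uniformVariance_smul,
    uniformVariance_powersetCard_sum grid ζ (hgrid ▸ hNs) (hgrid ▸ hN2), hgrid, hsum]
  simp [hnorm, hgrid]
  ring

/-- Variance of the RIS-side random factor of the RIBES scheme:
`V[v] = 4·(Nₛ(N−Nₛ)/(N(N−1)))·(N − E²/N)` with `E = μ₂·μ₃`. -/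
theorem stmt_8 (NH NV : ℕ) (hNH : 0 < NH) (hNV : 0 < NV)
    (N : ℕ) (hN : N = NH * NV) (hN2 : 2 ≤ N) (Ns : ℕ) (hNs : Ns ≤ N)
    (a b : ℝ) (ha : Real.sin (a / 2) ≠ 0) (hb : Real.sin (b / 2) ≠ 0) :
    let E : ℝ := (Real.sin (NH * a / 2) / Real.sin (a / 2)) *
        (Real.sin (NV * b / 2) / Real.sin (b / 2))
    let grid : Finset (ℕ × ℕ) := Finset.Icc 1 NH ×ˢ Finset.Icc 1 NV
    let ζ : ℕ × ℕ → ℂ := fun n =>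
      Complex.exp (Complex.I *
        ((a * ((n.1 : ℝ) - (NH + 1) / 2) + b * ((n.2 : ℝ) - (NV + 1) / 2) : ℝ) : ℂ))
    let v : Finset (ℕ × ℕ) → ℂ := fun T => 2 * ∑ n ∈ T, ζ n - ∑ n ∈ grid, ζ n
    (1 / (Nat.choose N Ns : ℝ)) *
        ∑ T ∈ grid.powersetCard Ns, ‖v T‖ ^ 2
      - ‖(1 / (Nat.choose N Ns : ℂ)) *
          ∑ T ∈ grid.powersetCard Ns, v T‖ ^ 2
      = 4 * ((Ns : ℝ) * ((N : ℝ) - Ns) / ((N : ℝ) * ((N : ℝ) - 1))) *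
          ((N : ℝ) - E ^ 2 / N) :=
  stmt_8_general NH NV N hN hN2 Ns hNs a b ha hb
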